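/- arXiv:2402.08435 — 2 statements merged into one kernel-verified Lean document; each statement's English description precedes it below -/
import Mathlib

section
/- With X_i := A_i + A_i† the weakly monotone position operators on F_wm(ℓ²(ℤ)), the averages (1/(2N+1)) Σ_{i=−N}^{N} X_i² converge in the strong operator topology, as N → ∞, to P_Ω + (1/2)(I − P_Ω). -/
open scoped ComplexOrder

/-- Index set for the orthonormal basis of the weakly monotone Fock space over `ℓ²(ℤ)`:
decreasing (finite) lists of integers; the empty list corresponds to the vacuum. -/
def WMIdx : Type := {l : List ℤ // l.Chain' (· ≥ ·)}

/-- `i` may be created on top of the tensor indexed by `l`. -/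
def WMIdx.ok (i : ℤ) (l : WMIdx) : Prop := ∀ j ∈ l.1.head?, i ≥ j

def WMIdx.cons (i : ℤ) (l : WMIdx) (h : WMIdx.ok i l) : WMIdx :=
  ⟨i :: l.1, List.isChain_cons.mpr ⟨h, l.2⟩⟩

def WMIdx.vac : WMIdx := ⟨[], List.isChain_nil⟩

/-!
Write `C i = A_i†`. Expanding `X_i² = A_i A_i + A_i A_i† + A_i† A_i + A_i† A_i†`, the two middle
terms act diagonally on the basis: `A_i A_i† e_l = e_l` exactly when `i` may be created on top of
`l`, and `A_i† A_i e_l = e_l` exactly when `i` is the head of `l`. Summed over `|i| ≤ N` this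
gives the coefficient `2N + 1` at the vacuum and `N + 2 - head l` elsewhere, i.e. `1` and `1/2`
after averaging. The vectors `A_i† A_i† e_l` are mutually orthogonal (as `A_i A_k† = 0` for
`i ≠ k`) and `A_i A_i e_l` vanishes unless `i` is the head of `l`, so the other two terms only
contribute `O(√N)`. Since `A_i† A_i` is a projection, `‖A_i†‖ ≤ 1`, so the averages are uniformly
bounded and convergence on the basis extends to all of `H`.
-/

open scoped ComplexInnerProductSpace NNReal Topology
open ContinuousLinearMap Filter Finset

theorem norm_sum_sq_of_pairwise_inner_eq_zero {𝕜 E ι : Type*} [RCLike 𝕜]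
    [SeminormedAddCommGroup E] [InnerProductSpace 𝕜 E] (v : ι → E) (s : Finset ι)
    (hv : (s : Set ι).Pairwise fun i j => inner 𝕜 (v i) (v j) = 0) :
    ‖∑ i ∈ s, v i‖ ^ 2 = ∑ i ∈ s, ‖v i‖ ^ 2 := by
  classical
  induction s using Finset.induction_on with
  | empty => simp
  | insert a s ha ih =>
    have horth : inner 𝕜 (v a) (∑ i ∈ s, v i) = 0 := by
      rw [inner_sum]
      exact sum_eq_zero fun j hj =>
        hv (by simp) (by simp [hj]) (by rintro rfl; exact ha hj)
    rw [sum_insert ha, sum_insert ha, ← ih (hv.mono (by simp)), sq, sq, sq,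
      norm_add_sq_eq_norm_sq_add_norm_sq_of_inner_eq_zero _ _ horth]

theorem norm_sum_le_sqrt_card_of_pairwise_inner_eq_zero {𝕜 E ι : Type*} [RCLike 𝕜]
    [SeminormedAddCommGroup E] [InnerProductSpace 𝕜 E] (v : ι → E) (s : Finset ι)
    (hv : (s : Set ι).Pairwise fun i j => inner 𝕜 (v i) (v j) = 0)
    (hv1 : ∀ i ∈ s, ‖v i‖ ≤ 1) :
    ‖∑ i ∈ s, v i‖ ≤ √(#s : ℝ) := by
  rw [Real.le_sqrt (norm_nonneg _) (Nat.cast_nonneg _),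
    norm_sum_sq_of_pairwise_inner_eq_zero v s hv]
  calc ∑ i ∈ s, ‖v i‖ ^ 2 ≤ ∑ _i ∈ s, (1 : ℝ) :=
        sum_le_sum fun i hi => pow_le_one₀ (norm_nonneg _) (hv1 i hi)
    _ = #s := by simp

theorem norm_two_mul_add_one {𝕜 : Type*} [RCLike 𝕜] (N : ℕ) : ‖(2 * N + 1 : 𝕜)‖ = 2 * N + 1 := by
  simpa using RCLike.norm_natCast (K := 𝕜) (2 * N + 1)

theorem tendsto_inv_two_mul_add_one_smul_of_norm_le_sqrt {𝕜 E : Type*} [RCLike 𝕜]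
    [SeminormedAddCommGroup E] [NormedSpace 𝕜 E] {r : ℕ → E} {c : ℝ}
    (hr : ∀ N, ‖r N‖ ≤ c * √(2 * N + 1)) :
    Tendsto (fun N : ℕ => (2 * N + 1 : 𝕜)⁻¹ • r N) atTop (𝓝 0) := by
  have hsqrt : Tendsto (fun N : ℕ => √(2 * N + 1)) atTop atTop :=
    Real.tendsto_sqrt_atTop.comp <| tendsto_atTop_add_const_right _ _ <|
      (tendsto_natCast_atTop_atTop).const_mul_atTop two_pos
  have hlim : Tendsto (fun N : ℕ => c * (√(2 * N + 1))⁻¹) atTop (𝓝 0) := by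
    simpa using hsqrt.inv_tendsto_atTop.const_mul c
  refine squeeze_zero_norm (fun N => ?_) hlim
  calc ‖(2 * N + 1 : 𝕜)⁻¹ • r N‖ = (2 * N + 1 : ℝ)⁻¹ * ‖r N‖ := by
        rw [norm_smul, norm_inv, norm_two_mul_add_one]
    _ ≤ (2 * N + 1 : ℝ)⁻¹ * (c * √(2 * N + 1)) := by gcongr; exact hr N
    _ = c * (√(2 * N + 1))⁻¹ := by
        rw [mul_left_comm, ← div_eq_inv_mul, Real.sqrt_div_self', one_div]

theorem tendsto_apply_of_tendsto_apply_of_dense_span {𝕜 E F ι : Type*}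
    [NontriviallyNormedField 𝕜] [SeminormedAddCommGroup E] [NormedSpace 𝕜 E]
    [SeminormedAddCommGroup F] [NormedSpace 𝕜 F] {l : Filter ι} {T : ι → E →L[𝕜] F}
    {L : E →L[𝕜] F} {K : ℝ≥0} (hT : ∀ i, ‖T i‖ ≤ K) {s : Set E}
    (hs : Dense (Submodule.span 𝕜 s : Set E)) (h : ∀ x ∈ s, Tendsto (fun i => T i x) l (𝓝 (L x)))
    (x : E) : Tendsto (fun i => T i x) l (𝓝 (L x)) := by
  let S : Submodule 𝕜 E :=
    { carrier := {x | Tendsto (fun i => T i x) l (𝓝 (L x))}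
      add_mem' := fun hx hy => by simpa using hx.add hy
      zero_mem' := by simpa using tendsto_const_nhds
      smul_mem' := fun c x hx => by simpa using hx.const_smul c }
  have hS : IsClosed (S : Set E) :=
    (LipschitzWith.uniformEquicontinuous _ K fun i =>
      (T i).lipschitz.weaken (mod_cast hT i)).equicontinuous.isClosed_setOfPred_tendsto
      L.continuous
  exact closure_minimal (Submodule.span_le.mpr fun y hy => h y hy) hS (hs x)

theorem HilbertBasis.ext_inner {ι 𝕜 E : Type*} [RCLike 𝕜] [NormedAddCommGroup E]
    [InnerProductSpace 𝕜 E] (b : HilbertBasis ι 𝕜 E) {x y : E}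
    (h : ∀ i, inner 𝕜 (b i) x = inner 𝕜 (b i) y) : x = y :=
  b.repr.injective <| lp.ext <| funext fun i => by simpa only [b.repr_apply_apply] using h i

theorem HilbertBasis.dense_span_range {ι 𝕜 E : Type*} [RCLike 𝕜] [NormedAddCommGroup E]
    [InnerProductSpace 𝕜 E] (b : HilbertBasis ι 𝕜 E) :
    Dense (Submodule.span 𝕜 (Set.range b) : Set E) :=
  Submodule.dense_iff_topologicalClosure_eq_top.mpr b.dense_span

theorem HilbertBasis.continuousLinearMap_ext {ι 𝕜 E F : Type*} [RCLike 𝕜] [NormedAddCommGroup E]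
    [InnerProductSpace 𝕜 E] [NormedAddCommGroup F] [NormedSpace 𝕜 F] (b : HilbertBasis ι 𝕜 E)
    {f g : E →L[𝕜] F} (h : ∀ i, f (b i) = g (b i)) : f = g :=
  ContinuousLinearMap.ext_on b.dense_span_range (by rintro _ ⟨i, rfl⟩; exact h i)

namespace WMIdx

theorem cons_inj {i : ℤ} {l m : WMIdx} {hl : ok i l} {hm : ok i m} :
    cons i l hl = cons i m hm ↔ l = m := by
  constructor
  · intro h
    exact Subtype.ext (List.cons_injective (congrArg Subtype.val h))
  · rintro rfl
    rfl

theorem head?_cons (i : ℤ) (l : WMIdx) (h : ok i l) : (cons i l h).1.head? = some i := rfl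

theorem ok_vac (i : ℤ) : ok i vac := by
  simp [ok, vac]

theorem ok_iff_of_head?_eq {i j : ℤ} {l : WMIdx} (hl : l.1.head? = some j) : ok i l ↔ j ≤ i := by
  simp [ok, hl]

theorem eq_vac_of_head?_eq_none {l : WMIdx} (hl : l.1.head? = none) : l = vac :=
  Subtype.ext (List.head?_eq_none_iff.mp hl)

theorem exists_eq_cons_of_head?_eq {i : ℤ} {l : WMIdx} (hl : l.1.head? = some i) :
    ∃ t h, l = cons i t h := by
  obtain ⟨_ | ⟨j, t⟩, hch⟩ := l
  · simp at hl
  · obtain rfl : j = i := by simpa using hl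
    exact ⟨⟨t, hch.tail⟩, fun k hk => List.isChain_cons.mp hch |>.1 k hk, rfl⟩

instance decidableOk (i : ℤ) (l : WMIdx) : Decidable (ok i l) :=
  inferInstanceAs (Decidable (∀ j ∈ l.1.head?, i ≥ j))

end WMIdx

theorem card_Icc_neg_self (N : ℕ) : #(Icc (-(N : ℤ)) N) = 2 * N + 1 := by
  rw [Int.card_Icc]
  omega

/-- The coefficient of `b l` in `∑_{|i| ≤ N} X_i² (b l)`, coming from the diagonal terms
`A_i A_i†` and `A_i† A_i`. -/
noncomputable def diagCount (N : ℕ) (l : WMIdx) : ℕ :=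
  #{i ∈ Icc (-(N : ℤ)) N | WMIdx.ok i l} + #{i ∈ Icc (-(N : ℤ)) N | l.1.head? = some i}

theorem diagCount_vac (N : ℕ) : diagCount N WMIdx.vac = 2 * N + 1 := by
  rw [diagCount, filter_true_of_mem fun i _ => WMIdx.ok_vac i, card_Icc_neg_self]
  simp [WMIdx.vac]

theorem diagCount_of_head?_eq {j : ℤ} {l : WMIdx} (hl : l.1.head? = some j) {N : ℕ}
    (hN : j.natAbs ≤ N) : (diagCount N l : ℤ) = N + 2 - j := by
  have hok : {i ∈ Icc (-(N : ℤ)) N | j ≤ i} = Icc j N := by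
    ext i
    simp only [mem_filter, mem_Icc]
    omega
  have hhead : {i ∈ Icc (-(N : ℤ)) N | some j = some i} = {j} := by
    ext i
    simp only [mem_filter, mem_Icc, Option.some.injEq, mem_singleton]
    omega
  simp only [diagCount, WMIdx.ok_iff_of_head?_eq hl, hl, hok, hhead, Int.card_Icc, card_singleton]
  omega

theorem tendsto_diagCount_vac :
    Tendsto (fun N : ℕ => (diagCount N WMIdx.vac : ℂ) / (2 * N + 1)) atTop (𝓝 1) := by
  refine tendsto_const_nhds.congr fun N => ?_
  rw [diagCount_vac, Nat.cast_add_one, Nat.cast_mul, Nat.cast_ofNat, div_self]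
  exact_mod_cast (2 * N).succ_ne_zero

theorem tendsto_diagCount_of_head?_eq {j : ℤ} {l : WMIdx} (hl : l.1.head? = some j) :
    Tendsto (fun N : ℕ => (diagCount N l : ℂ) / (2 * N + 1)) atTop (𝓝 (1 / 2)) := by
  refine (tendsto_add_mul_div_add_mul_atTop_nhds (2 - j : ℂ) 1 1 two_ne_zero).congr' ?_
  filter_upwards [eventually_ge_atTop j.natAbs] with N hN
  have hcount : (diagCount N l : ℂ) = ((diagCount N l : ℤ) : ℂ) := rfl
  rw [hcount, diagCount_of_head?_eq hl hN]
  push_cast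
  ring

section Position

variable {H : Type} [NormedAddCommGroup H] [InnerProductSpace ℂ H] [CompleteSpace H]

noncomputable def position (C : ℤ → H →L[ℂ] H) (i : ℤ) : H →L[ℂ] H := adjoint (C i) + C i

noncomputable def positionSqAverage (C : ℤ → H →L[ℂ] H) (N : ℕ) : H →L[ℂ] H :=
  (2 * N + 1 : ℂ)⁻¹ • ∑ i ∈ Icc (-(N : ℤ)) N, position C i ^ 2

theorem norm_position_le {C : ℤ → H →L[ℂ] H} (hC1 : ∀ i, ‖C i‖ ≤ 1) (i : ℤ) :
    ‖position C i‖ ≤ 2 := by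
  refine (norm_add_le _ _).trans ?_
  rw [LinearIsometryEquiv.norm_map]
  linarith [hC1 i]

theorem norm_positionSqAverage_le {C : ℤ → H →L[ℂ] H} (hC1 : ∀ i, ‖C i‖ ≤ 1) (N : ℕ) :
    ‖positionSqAverage C N‖ ≤ 4 := by
  have hsq (i : ℤ) : ‖position C i ^ 2‖ ≤ 4 :=
    (norm_pow_le' _ two_pos).trans <| by
      nlinarith [norm_position_le hC1 i, norm_nonneg (position C i)]
  calc ‖positionSqAverage C N‖
      ≤ (2 * N + 1 : ℝ)⁻¹ * ∑ _i ∈ Icc (-(N : ℤ)) N, (4 : ℝ) := by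
        rw [positionSqAverage, norm_smul, norm_inv, norm_two_mul_add_one]
        gcongr
        exact (norm_sum_le _ _).trans (sum_le_sum fun i _ => hsq i)
    _ = 4 := by
        rw [sum_const, card_Icc_neg_self, nsmul_eq_mul]
        push_cast
        field_simp

end Position

noncomputable def vacuumProjection {H : Type} [NormedAddCommGroup H] [InnerProductSpace ℂ H]
    (b : HilbertBasis WMIdx ℂ H) : H →L[ℂ] H :=
  (innerSL ℂ (b WMIdx.vac)).smulRight (b WMIdx.vac)

section Creation

variable {H : Type} [NormedAddCommGroup H] [InnerProductSpace ℂ H] [CompleteSpace H]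
  (b : HilbertBasis WMIdx ℂ H) {C : ℤ → H →L[ℂ] H}
  (hC : ∀ i l (h : WMIdx.ok i l), C i (b l) = b (WMIdx.cons i l h))
  (hC0 : ∀ i l, ¬ WMIdx.ok i l → C i (b l) = 0)
include hC hC0

theorem adjoint_creation_apply_cons (i : ℤ) (l : WMIdx) (h : WMIdx.ok i l) :
    adjoint (C i) (b (WMIdx.cons i l h)) = b l := by
  refine b.ext_inner fun m => ?_
  rw [adjoint_inner_right]
  by_cases hm : WMIdx.ok i m
  · classical
    simp only [hC i m hm, orthonormal_iff_ite.mp b.orthonormal, WMIdx.cons_inj]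
  · rw [hC0 i m hm, inner_zero_left, b.orthonormal.inner_eq_zero (by rintro rfl; exact hm h)]

theorem adjoint_creation_apply_of_head?_ne {i : ℤ} {l : WMIdx} (hl : l.1.head? ≠ some i) :
    adjoint (C i) (b l) = 0 := by
  refine b.ext_inner fun m => ?_
  rw [adjoint_inner_right, inner_zero_right]
  by_cases hm : WMIdx.ok i m
  · rw [hC i m hm, b.orthonormal.inner_eq_zero (by rintro rfl; exact hl rfl)]
  · rw [hC0 i m hm, inner_zero_left]

theorem adjoint_creation_creation_apply (i : ℤ) (l : WMIdx) :
    adjoint (C i) (C i (b l)) = if WMIdx.ok i l then b l else 0 := by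
  split_ifs with hl
  · rw [hC i l hl, adjoint_creation_apply_cons b hC hC0]
  · rw [hC0 i l hl, map_zero]

theorem creation_adjoint_creation_apply (i : ℤ) (l : WMIdx) :
    C i (adjoint (C i) (b l)) = if l.1.head? = some i then b l else 0 := by
  split_ifs with hl
  · obtain ⟨t, ht, rfl⟩ := WMIdx.exists_eq_cons_of_head?_eq hl
    rw [adjoint_creation_apply_cons b hC hC0, hC]
  · rw [adjoint_creation_apply_of_head?_ne b hC hC0 hl, map_zero]

theorem adjoint_creation_comp_creation_of_ne {i k : ℤ} (hik : i ≠ k) :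
    adjoint (C i) ∘L C k = 0 := by
  refine b.continuousLinearMap_ext fun l => ?_
  rw [comp_apply, zero_apply]
  by_cases hl : WMIdx.ok k l
  · rw [hC k l hl, adjoint_creation_apply_of_head?_ne b hC hC0]
    simpa [WMIdx.head?_cons] using hik.symm
  · rw [hC0 k l hl, map_zero]

theorem isStarProjection_star_creation_mul_self (i : ℤ) : IsStarProjection (star (C i) * C i) := by
  refine ⟨b.continuousLinearMap_ext fun l => ?_, IsSelfAdjoint.star_mul_self _⟩
  have h := adjoint_creation_creation_apply b hC hC0 i l
  show adjoint (C i) (C i (adjoint (C i) (C i (b l)))) = adjoint (C i) (C i (b l))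
  rw [h]
  split_ifs with hl
  · rw [h, if_pos hl]
  · rw [map_zero, map_zero]

theorem norm_creation_le_one (i : ℤ) : ‖C i‖ ≤ 1 := by
  have h := (isStarProjection_star_creation_mul_self b hC hC0 i).norm_le
  rw [CStarRing.norm_star_mul_self] at h
  nlinarith [norm_nonneg (C i)]

theorem position_sq_apply_basis (i : ℤ) (l : WMIdx) :
    (position C i ^ 2) (b l) =
      ((if WMIdx.ok i l then b l else 0) + (if l.1.head? = some i then b l else 0)) +
        (C i (C i (b l)) + adjoint (C i) (adjoint (C i) (b l))) := by
  simp only [pow_two, mul_apply_eq_comp, position, add_apply, map_add,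
    adjoint_creation_creation_apply b hC hC0, creation_adjoint_creation_apply b hC hC0]
  abel

theorem sum_position_sq_apply_basis (s : Finset ℤ) (l : WMIdx) :
    ∑ i ∈ s, (position C i ^ 2) (b l) =
      (#{i ∈ s | WMIdx.ok i l} + #{i ∈ s | l.1.head? = some i}) • b l +
        (∑ i ∈ s, C i (C i (b l)) + ∑ i ∈ s, adjoint (C i) (adjoint (C i) (b l))) := by
  simp only [position_sq_apply_basis b hC hC0, sum_add_distrib, ← sum_filter, sum_const, add_smul]

theorem norm_sum_creation_creation_apply_basis_le (s : Finset ℤ) (l : WMIdx) :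
    ‖∑ i ∈ s, C i (C i (b l))‖ ≤ √(#s : ℝ) := by
  have hC1 := norm_creation_le_one b hC hC0
  refine norm_sum_le_sqrt_card_of_pairwise_inner_eq_zero (𝕜 := ℂ) _ s
    (fun i _ k _ hik => ?_) fun i _ => ?_
  · dsimp only
    rw [← adjoint_inner_right, ← comp_apply, adjoint_creation_comp_creation_of_ne b hC hC0 hik,
      zero_apply, inner_zero_right]
  · calc ‖C i (C i (b l))‖ ≤ ‖C i (b l)‖ := by simpa using (C i).le_of_opNorm_le (hC1 i) _
      _ ≤ ‖b l‖ := by simpa using (C i).le_of_opNorm_le (hC1 i) _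
      _ = 1 := b.orthonormal.1 l

theorem norm_sum_adjoint_adjoint_apply_basis_le (s : Finset ℤ) (l : WMIdx) :
    ‖∑ i ∈ s, adjoint (C i) (adjoint (C i) (b l))‖ ≤ √(#s : ℝ) := by
  have hA1 (i : ℤ) : ‖adjoint (C i)‖ ≤ 1 := by
    rw [LinearIsometryEquiv.norm_map]; exact norm_creation_le_one b hC hC0 i
  have hvanish {i : ℤ} (hi : l.1.head? ≠ some i) : adjoint (C i) (adjoint (C i) (b l)) = 0 := by
    rw [adjoint_creation_apply_of_head?_ne b hC hC0 hi, map_zero]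
  refine norm_sum_le_sqrt_card_of_pairwise_inner_eq_zero (𝕜 := ℂ) _ s
    (fun i _ k _ hik => ?_) fun i _ => ?_
  · dsimp only
    by_cases hi : l.1.head? = some i
    · rw [hvanish (i := k) (by rw [hi]; simpa using hik), inner_zero_right]
    · rw [hvanish hi, inner_zero_left]
  · calc ‖adjoint (C i) (adjoint (C i) (b l))‖ ≤ ‖adjoint (C i) (b l)‖ := by
          simpa using (adjoint (C i)).le_of_opNorm_le (hA1 i) _
      _ ≤ ‖b l‖ := by simpa using (adjoint (C i)).le_of_opNorm_le (hA1 i) _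
      _ = 1 := b.orthonormal.1 l

theorem tendsto_positionSqAverage_apply_basis_of_tendsto {l : WMIdx} {μ : ℂ}
    (h : Tendsto (fun N : ℕ => (diagCount N l : ℂ) / (2 * N + 1)) atTop (𝓝 μ)) :
    Tendsto (fun N => positionSqAverage C N (b l)) atTop (𝓝 (μ • b l)) := by
  have hrem (N : ℕ) : ‖∑ i ∈ Icc (-(N : ℤ)) N, C i (C i (b l)) +
      ∑ i ∈ Icc (-(N : ℤ)) N, adjoint (C i) (adjoint (C i) (b l))‖ ≤ 2 * √(2 * N + 1) := by
    have hcard : (#(Icc (-(N : ℤ)) N) : ℝ) = 2 * N + 1 := by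
      rw [card_Icc_neg_self]
      push_cast
      ring
    calc _ ≤ √(#(Icc (-(N : ℤ)) N) : ℝ) + √(#(Icc (-(N : ℤ)) N) : ℝ) :=
          (norm_add_le _ _).trans <| add_le_add
            (norm_sum_creation_creation_apply_basis_le b hC hC0 _ l)
            (norm_sum_adjoint_adjoint_apply_basis_le b hC hC0 _ l)
      _ = 2 * √(2 * N + 1) := by rw [hcard]; ring
  have hr := tendsto_inv_two_mul_add_one_smul_of_norm_le_sqrt (𝕜 := ℂ) hrem
  convert (h.smul_const (b l)).add hr using 2 with N
  · rw [positionSqAverage, smul_apply, _root_.sum_apply, sum_position_sq_apply_basis b hC hC0,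
      smul_add, ← Nat.cast_smul_eq_nsmul ℂ, smul_smul, diagCount, div_eq_inv_mul]
  · rw [add_zero]

theorem tendsto_positionSqAverage_apply_basis (l : WMIdx) :
    Tendsto (fun N => positionSqAverage C N (b l)) atTop
      (𝓝 (vacuumProjection b (b l) + (1 / 2 : ℂ) • (b l - vacuumProjection b (b l)))) := by
  cases hl : l.1.head? with
  | none =>
    obtain rfl := WMIdx.eq_vac_of_head?_eq_none hl
    have hP : vacuumProjection b (b WMIdx.vac) = b WMIdx.vac := by
      simp [vacuumProjection, inner_self_eq_norm_sq_to_K, b.orthonormal.1]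
    rw [hP, sub_self, smul_zero, add_zero]
    simpa using tendsto_positionSqAverage_apply_basis_of_tendsto b hC hC0 tendsto_diagCount_vac
  | some j =>
    have hP : vacuumProjection b (b l) = 0 := by
      rw [vacuumProjection, smulRight_apply, innerSL_apply_apply,
        b.orthonormal.inner_eq_zero (by rintro rfl; simp [WMIdx.vac] at hl), zero_smul]
    rw [hP, sub_zero, zero_add]
    exact tendsto_positionSqAverage_apply_basis_of_tendsto b hC hC0
      (tendsto_diagCount_of_head?_eq hl)

end Creation

/-- with `X_i = A_i + A_i†`, the averages `(1/(2N+1)) Σ_{i=-N}^{N} X_i²`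
converge strongly to `P_Ω + (1/2)(I − P_Ω)`. -/
theorem wm_position_square_averages_strong_limit {H : Type} [NormedAddCommGroup H] [InnerProductSpace ℂ H] [CompleteSpace H]
    (b : HilbertBasis WMIdx ℂ H) (C : ℤ → H →L[ℂ] H)
    (hC : ∀ i l (h : WMIdx.ok i l), C i (b l) = b (WMIdx.cons i l h))
    (hC0 : ∀ i l, ¬ WMIdx.ok i l → C i (b l) = 0)
    (PΩ : H →L[ℂ] H) (hPΩ : PΩ = (innerSL ℂ (b WMIdx.vac)).smulRight (b WMIdx.vac)) :
    ∀ x : H, Filter.Tendsto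
      (fun N : ℕ => ((2 * N + 1 : ℂ))⁻¹ • ∑ i ∈ Finset.Icc (-(N : ℤ)) (N : ℤ),
        ((ContinuousLinearMap.adjoint (C i) + C i) ^ 2) x)
      Filter.atTop (nhds (PΩ x + (1 / 2 : ℂ) • (x - PΩ x))) := by
  intro x
  have hlim := tendsto_apply_of_tendsto_apply_of_dense_span (K := 4)
    (L := vacuumProjection b + (1 / 2 : ℂ) • (1 - vacuumProjection b))
    (norm_positionSqAverage_le (norm_creation_le_one b hC hC0)) b.dense_span_range
    (by rintro _ ⟨l, rfl⟩; simpa using tendsto_positionSqAverage_apply_basis b hC hC0 l) x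
  subst hPΩ
  simpa [positionSqAverage, position, vacuumProjection, _root_.sum_apply] using hlim
end

section
/- If π is a representation of the universal C*-algebra O_{A_ℕ} on F_wm(ℓ²(ℕ)) satisfying π(s_i) = A_i† for all i ≥ 1, then π(s_0) = z P_Ω for some complex number z with |z| = 1. -/
open scoped ComplexOrder

/-- Index set for the orthonormal basis of the weakly monotone Fock space over \`ℓ²(ℕ)\`
(indices \`≥ 1\`): decreasing (finite) lists of positive naturals; the empty list is the
vacuum. -/
def WMIdxN : Type := {l : List ℕ+ // l.Chain' (· ≥ ·)}

def WMIdxN.ok (i : ℕ+) (l : WMIdxN) : Prop := ∀ j ∈ l.1.head?, i ≥ j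

def WMIdxN.cons (i : ℕ+) (l : WMIdxN) (h : WMIdxN.ok i l) : WMIdxN :=
  ⟨i :: l.1, List.isChain_cons.mpr ⟨h, l.2⟩⟩

def WMIdxN.vac : WMIdxN := ⟨[], List.isChain_nil⟩

/-!
Both `π(s₀)* π(s₀)` and `π(s₀) π(s₀)*` equal the vacuum projection `P_Ω`: the relation
`s₁* s₁ = s₀ s₀* + s₁ s₁*` gives `π(s₀) π(s₀)* = A₁ A₁† - A₁† A₁ = P_Ω`, and `s₀* s₀ = s₀ s₀*`.
A partial isometry `V` with these initial and final projections satisfies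
`V = P_Ω V P_Ω = ⟨Ω, V Ω⟩ • P_Ω`, and `V* V = P_Ω ≠ 0` forces `|⟨Ω, V Ω⟩| = 1`.
-/

open InnerProductSpace

section RankOne

variable {𝕜 E : Type*} [RCLike 𝕜] [NormedAddCommGroup E] [InnerProductSpace 𝕜 E]

theorem rankOne_mul_mul_rankOne (x y z w : E) (f : E →L[𝕜] E) :
    rankOne 𝕜 x y * f * rankOne 𝕜 z w = inner 𝕜 y (f z) • rankOne 𝕜 x w := by
  rw [mul_assoc, ContinuousLinearMap.mul_def, ContinuousLinearMap.mul_def, comp_rankOne,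
    rankOne_comp_rankOne]

variable [CompleteSpace E]

theorem exists_eq_smul_rankOne_self_of_partialIsometry {e : E} (he : ‖e‖ = 1)
    {V : E →L[𝕜] E} (hV : V * star V * V = V) (hinit : star V * V = rankOne 𝕜 e e)
    (hfin : V * star V = rankOne 𝕜 e e) :
    ∃ z : 𝕜, ‖z‖ = 1 ∧ V = z • rankOne 𝕜 e e := by
  set P := rankOne 𝕜 e e
  have hPV : P * V = V := by rw [← hfin, hV]
  have hVP : V * P = V := by rw [← hinit, ← mul_assoc, hV]
  have hVz : V = inner 𝕜 e (V e) • P := by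
    calc V = P * V * P := by rw [hPV, hVP]
      _ = _ := rankOne_mul_mul_rankOne e e e e V
  set z := inner 𝕜 e (V e)
  refine ⟨z, ?_, hVz⟩
  have hP : IsStarProjection P := isStarProjection_rankOne_self he
  have hzP : ((‖z‖ ^ 2 : ℝ) : 𝕜) • P = (1 : 𝕜) • P := by
    calc ((‖z‖ ^ 2 : ℝ) : 𝕜) • P = star (z • P) * (z • P) := by
          rw [star_smul, hP.isSelfAdjoint.star_eq, smul_mul_smul, hP.isIdempotentElem.eq,
            RCLike.star_def, RCLike.conj_mul]
          norm_cast
      _ = (1 : 𝕜) • P := by rw [← hVz, hinit, one_smul]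
  have he0 : e ≠ 0 := ne_zero_of_norm_ne_zero (he ▸ one_ne_zero)
  have hP0 : P ≠ 0 := rankOne_ne_zero he0 he0
  have hz2 : ‖z‖ ^ 2 = 1 := by exact_mod_cast smul_left_injective 𝕜 hP0 hzP
  exact (pow_eq_one_iff_of_nonneg (norm_nonneg z) two_ne_zero).mp hz2

end RankOne

namespace HilbertBasis

variable {ι 𝕜 E F : Type*} [RCLike 𝕜] [NormedAddCommGroup E] [InnerProductSpace 𝕜 E]
  [NormedAddCommGroup F] [InnerProductSpace 𝕜 F] (b : HilbertBasis ι 𝕜 E)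

theorem ext_inner_left {x y : E} (h : ∀ i, inner 𝕜 (b i) x = inner 𝕜 (b i) y) : x = y :=
  b.repr.injective <| lp.ext <| funext fun i => by simp only [b.repr_apply_apply, h]

theorem continuousLinearMap_ext_s19 {f g : E →L[𝕜] F} (h : ∀ i, f (b i) = g (b i)) : f = g :=
  ContinuousLinearMap.ext_on (Submodule.dense_iff_topologicalClosure_eq_top.mpr b.dense_span)
    (Set.forall_mem_range.mpr h)

end HilbertBasis

namespace WMIdxN

theorem cons_injective {i : ℕ+} {l m : WMIdxN} {hl : ok i l} {hm : ok i m}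
    (h : cons i l hl = cons i m hm) : l = m :=
  Subtype.ext (List.cons_injective (congrArg Subtype.val h))

theorem exists_eq_cons_of_head? {i : ℕ+} {l : WMIdxN} (h : l.1.head? = some i) :
    ∃ t hi, l = cons i t hi := by
  obtain ⟨_ | ⟨j, t⟩, hl⟩ := l
  · cases h
  · cases h
    exact ⟨⟨t, (List.isChain_cons.mp hl).2⟩, (List.isChain_cons.mp hl).1, rfl⟩

theorem eq_vac_iff {l : WMIdxN} : l = vac ↔ l.1 = [] :=
  ⟨fun h => h ▸ rfl, fun h => Subtype.ext h⟩

theorem ok_one_iff {l : WMIdxN} : ok 1 l ↔ l = vac ∨ l.1.head? = some 1 := by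
  rw [eq_vac_iff, ← List.head?_eq_none_iff, ok]
  cases l.1.head? with
  | none => simp
  | some j => simp

end WMIdxN

/-- `C i` acts as the creation operator `A_i†` in the basis `b`. -/
structure IsWMCreationOps {H : Type*} [NormedAddCommGroup H] [InnerProductSpace ℂ H]
    (b : HilbertBasis WMIdxN ℂ H) (C : ℕ+ → H →L[ℂ] H) : Prop where
  apply_of_ok : ∀ i l (h : WMIdxN.ok i l), C i (b l) = b (WMIdxN.cons i l h)
  apply_of_not_ok : ∀ i l, ¬ WMIdxN.ok i l → C i (b l) = 0

namespace IsWMCreationOps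

open scoped Classical

variable {H : Type*} [NormedAddCommGroup H] [InnerProductSpace ℂ H] [CompleteSpace H]
  {b : HilbertBasis WMIdxN ℂ H} {C : ℕ+ → H →L[ℂ] H} (hC : IsWMCreationOps b C)

include hC

theorem star_apply_cons (i : ℕ+) (l : WMIdxN) (h : WMIdxN.ok i l) :
    star (C i) (b (WMIdxN.cons i l h)) = b l := by
  refine b.ext_inner_left fun m => ?_
  rw [ContinuousLinearMap.star_eq_adjoint, ContinuousLinearMap.adjoint_inner_right]
  by_cases hm : WMIdxN.ok i m
  · rw [hC.apply_of_ok i m hm, orthonormal_iff_ite.mp b.orthonormal,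
      orthonormal_iff_ite.mp b.orthonormal]
    exact if_congr ⟨WMIdxN.cons_injective, fun h => h ▸ rfl⟩ rfl rfl
  · rw [hC.apply_of_not_ok i m hm, inner_zero_left, orthonormal_iff_ite.mp b.orthonormal,
      if_neg (by rintro rfl; exact hm h)]

theorem star_apply_of_head?_ne (i : ℕ+) (l : WMIdxN) (h : l.1.head? ≠ some i) :
    star (C i) (b l) = 0 := by
  refine b.ext_inner_left fun m => ?_
  rw [ContinuousLinearMap.star_eq_adjoint, ContinuousLinearMap.adjoint_inner_right,
    inner_zero_right]
  by_cases hm : WMIdxN.ok i m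
  · rw [hC.apply_of_ok i m hm, orthonormal_iff_ite.mp b.orthonormal,
      if_neg (by rintro rfl; exact h rfl)]
  · rw [hC.apply_of_not_ok i m hm, inner_zero_left]

theorem star_mul_self_apply (i : ℕ+) (l : WMIdxN) :
    (star (C i) * C i) (b l) = if WMIdxN.ok i l then b l else 0 := by
  split_ifs with h
  · rw [mul_apply_eq_comp, hC.apply_of_ok i l h, hC.star_apply_cons]
  · rw [mul_apply_eq_comp, hC.apply_of_not_ok i l h, map_zero]

theorem mul_star_self_apply (i : ℕ+) (l : WMIdxN) :
    (C i * star (C i)) (b l) = if l.1.head? = some i then b l else 0 := by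
  split_ifs with h
  · obtain ⟨t, ht, rfl⟩ := WMIdxN.exists_eq_cons_of_head? h
    rw [mul_apply_eq_comp, hC.star_apply_cons, hC.apply_of_ok]
  · rw [mul_apply_eq_comp, hC.star_apply_of_head?_ne i l h, map_zero]

theorem star_mul_self_sub_mul_star_self_one :
    star (C 1) * C 1 - C 1 * star (C 1) = rankOne ℂ (b WMIdxN.vac) (b WMIdxN.vac) := by
  refine b.continuousLinearMap_ext_s19 fun l => ?_
  rw [sub_apply, hC.star_mul_self_apply, hC.mul_star_self_apply,
    rankOne_apply, orthonormal_iff_ite.mp b.orthonormal]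
  by_cases hl : l = WMIdxN.vac
  · subst hl
    rw [if_pos (WMIdxN.ok_one_iff.mpr (Or.inl rfl)), if_neg nofun, if_pos rfl, one_smul, sub_zero]
  · rw [if_neg (Ne.symm hl), zero_smul, sub_eq_zero]
    exact if_congr (WMIdxN.ok_one_iff.trans (or_iff_right hl)) rfl rfl

end IsWMCreationOps

theorem wm_nat_rep_value_at_s0_general {H : Type} [NormedAddCommGroup H] [InnerProductSpace ℂ H] [CompleteSpace H]
    (b : HilbertBasis WMIdxN ℂ H) (C : ℕ+ → H →L[ℂ] H)
    (hC : ∀ i l (h : WMIdxN.ok i l), C i (b l) = b (WMIdxN.cons i l h))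
    (hC0 : ∀ i l, ¬ WMIdxN.ok i l → C i (b l) = 0)
    (T : ℕ → H →L[ℂ] H)
    (hpi : ∀ i, T i * star (T i) * T i = T i)
    (hsum : ∀ i, star (T i) * T i = ∑ k ∈ Finset.range (i + 1), T k * star (T k))
    (hT : ∀ i : ℕ+, T (i : ℕ) = C i) :
    ∃ z : ℂ, ‖z‖ = 1 ∧
      T 0 = z • ((innerSL ℂ (b WMIdxN.vac)).smulRight (b WMIdxN.vac)) := by
  have hC' : IsWMCreationOps b C := ⟨hC, hC0⟩
  have hΩ : ‖b WMIdxN.vac‖ = 1 := b.orthonormal.1 WMIdxN.vac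
  have hfin : T 0 * star (T 0) = rankOne ℂ (b WMIdxN.vac) (b WMIdxN.vac) := by
    have hT1 : T 1 = C 1 := hT 1
    have h1 := hsum 1
    rw [Finset.sum_range_succ, Finset.sum_range_one] at h1
    rw [← hC'.star_mul_self_sub_mul_star_self_one, ← hT1, h1, add_sub_cancel_right]
  have hinit : star (T 0) * T 0 = rankOne ℂ (b WMIdxN.vac) (b WMIdxN.vac) := by
    rw [hsum 0, Finset.sum_range_one, hfin]
  exact exists_eq_smul_rankOne_self_of_partialIsometry hΩ (hpi 0) hinit hfin

/-- if `π` is a representation of `O_{A_ℕ}` on the weakly monotone Fock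
space over `ℓ²(ℕ)` (encoded as operators `T i = π(s_i)` satisfying the defining
relations) with `π(s_i) = A_i†` for all `i ≥ 1`, then `π(s_0) = z P_Ω` for some
unimodular `z ∈ ℂ`. -/
theorem wm_nat_rep_value_at_s0 {H : Type} [NormedAddCommGroup H] [InnerProductSpace ℂ H] [CompleteSpace H]
    (b : HilbertBasis WMIdxN ℂ H) (C : ℕ+ → H →L[ℂ] H)
    (hC : ∀ i l (h : WMIdxN.ok i l), C i (b l) = b (WMIdxN.cons i l h))
    (hC0 : ∀ i l, ¬ WMIdxN.ok i l → C i (b l) = 0)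
    (T : ℕ → H →L[ℂ] H)
    (hpi : ∀ i, T i * star (T i) * T i = T i)
    (horth : ∀ i j, i ≠ j → star (T i) * T j = 0)
    (hsum : ∀ i, star (T i) * T i = ∑ k ∈ Finset.range (i + 1), T k * star (T k))
    (hT : ∀ i : ℕ+, T (i : ℕ) = C i) :
    ∃ z : ℂ, ‖z‖ = 1 ∧
      T 0 = z • ((innerSL ℂ (b WMIdxN.vac)).smulRight (b WMIdxN.vac)) :=
  wm_nat_rep_value_at_s0_general b C hC hC0 T hpi hsum hT
end
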